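/- arXiv:1104.1317 — 3 statements merged into one kernel-verified Lean document; each statement's English description precedes it below -/
import Mathlib

section
/- Let Q, R ∈ ℍ^N be vectors whose components are all unit quaternions. Then Q Q* = R R* (as N×N quaternion matrices, where * denotes conjugate-transpose) if and only if there exists a unit quaternion s such that Q = R s (componentwise right multiplication by s). -/
noncomputable section

abbrev H := Quaternion ℝ

/-!
Fix an index `i₀`. If `Q Q* = R R*`, the candidate is `s = R i₀* Q i₀`, which is unitary as a
product of unitaries, and `Q i = Q i (Q i₀* Q i₀) = (R i R i₀*) Q i₀ = R i s` for every `i`.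
Conversely, if `Q = R s` with `s` unitary, then `Q i Q j* = R i (s s*) R j* = R i R j*`.
-/

section StarMonoid

variable {A ι : Type*} [Monoid A] [StarMul A]

theorem mul_star_eq_mul_star_of_eq_mul_unitary {q r : ι → A} {s : A} (hs : s ∈ unitary A)
    (hqr : ∀ i, q i = r i * s) (i j : ι) : q i * star (q j) = r i * star (r j) := by
  rw [hqr, hqr, star_mul, mul_assoc, ← mul_assoc s, Unitary.mul_star_self_of_mem hs, one_mul]

theorem exists_unitary_eq_mul_of_mul_star_eq {q r : ι → A} (hq : ∀ i, q i ∈ unitary A)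
    (hr : ∀ i, r i ∈ unitary A) (hqr : ∀ i j, q i * star (q j) = r i * star (r j)) :
    ∃ s ∈ unitary A, ∀ i, q i = r i * s := by
  rcases isEmpty_or_nonempty ι with _ | ⟨⟨i₀⟩⟩
  · exact ⟨1, one_mem _, isEmptyElim⟩
  refine ⟨star (r i₀) * q i₀, mul_mem (Unitary.star_mem (hr i₀)) (hq i₀), fun i => ?_⟩
  calc q i = q i * star (q i₀) * q i₀ := by
        rw [mul_assoc, Unitary.star_mul_self_of_mem (hq i₀), mul_one]
    _ = r i * (star (r i₀) * q i₀) := by rw [hqr, mul_assoc]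

theorem mul_star_eq_mul_star_iff_exists_unitary {q r : ι → A} (hq : ∀ i, q i ∈ unitary A)
    (hr : ∀ i, r i ∈ unitary A) :
    (∀ i j, q i * star (q j) = r i * star (r j)) ↔ ∃ s ∈ unitary A, ∀ i, q i = r i * s :=
  ⟨exists_unitary_eq_mul_of_mul_star_eq hq hr, fun ⟨_, hs, hqr⟩ =>
    mul_star_eq_mul_star_of_eq_mul_unitary hs hqr⟩

end StarMonoid

theorem Quaternion.mem_unitary_iff_norm_eq_one {q : Quaternion ℝ} :
    q ∈ unitary (Quaternion ℝ) ↔ ‖q‖ = 1 := by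
  rw [Unitary.mem_iff, star_mul_self, self_mul_star, and_self, normSq_eq_norm_mul_self, ← coe_one,
    coe_inj, ← sq, pow_eq_one_iff_of_nonneg (norm_nonneg q) two_ne_zero]

/-- For vectors `Q R : ℍ^N` of unit quaternions,
`Q Q* = R R*` iff there is a unit quaternion `s` with `Q = R s`. -/
theorem unit_quaternion_vector_outer_product_eq_iff
    (N : ℕ) (Q R : Fin N → H)
    (hQ : ∀ i, ‖Q i‖ = 1) (hR : ∀ i, ‖R i‖ = 1) :
    (Matrix.of fun i j => Q i * star (Q j)) = (Matrix.of fun i j => R i * star (R j)) ↔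
      ∃ s : H, ‖s‖ = 1 ∧ ∀ i, Q i = R i * s := by
  simp only [← Quaternion.mem_unitary_iff_norm_eq_one] at hQ hR ⊢
  exact Matrix.ext_iff.symm.trans (mul_star_eq_mul_star_iff_exists_unitary hQ hR)
end
end

section
/- For any two unit quaternions q and q̂, the spectral (operator Euclidean) norm of the difference of the associated 3D rotation matrices satisfies ‖R(q̂) − R(q)‖₂ = |q̂ − q|₂ · √(4 − |q̂ − q|₂²). -/
/-!
Write `r = q̄ q̂`, a unit quaternion, and `w` for its imaginary part. For a pure quaternion `V`,
`q̂ V q̂̄ - q V q̄ = q (r V - V r) r̄ q̄`, and `r V - V r = w V - V w` since the real part of `r` is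
central. The commutator has norm at most `2 |w| |V|`, with equality when `V ⊥ w` (then `V` and `w`
anticommute), so the operator norm is `2 |w|`. Finally `|q̂ - q|² = |r - 1|² = 2 - 2 Re r` and
`|w|² = 1 - (Re r)²`, whence `4 |w|² = |q̂ - q|² (4 - |q̂ - q|²)`.
-/

noncomputable section

/-- The pure quaternions `i, j, k` identified with the canonical basis of `ℝ³`. -/
def pureBasis : Fin 3 → H := ![⟨0,1,0,0⟩, ⟨0,0,1,0⟩, ⟨0,0,0,1⟩]

/-- The `i`-th coordinate of a quaternion in the basis `i, j, k` (pure part). -/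
def pureComp (i : Fin 3) (q : H) : ℝ := ![q.imI, q.imJ, q.imK] i

/-- The 3×3 rotation matrix associated to a unit quaternion `q`,
given by the conjugation action `v ↦ q v q̄` on pure quaternions. -/
def rotMat (q : H) : Matrix (Fin 3) (Fin 3) ℝ :=
  Matrix.of fun i j => pureComp i (q * pureBasis j * star q)

/-- Euclidean norm of a vector. -/
def euclNorm {n : ℕ} (v : Fin n → ℝ) : ℝ := Real.sqrt (∑ i, ‖v i‖ ^ 2)

/-- Operator (spectral) norm of a real matrix with respect to Euclidean norms. -/
def opNorm {n : ℕ} (A : Matrix (Fin n) (Fin n) ℝ) : ℝ :=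
  sSup {r | ∃ v : Fin n → ℝ, euclNorm v = 1 ∧ r = euclNorm (A.mulVec v)}

open Quaternion Module Matrix

lemma exists_norm_eq_one_inner_eq_zero {E : Type*} [NormedAddCommGroup E] [InnerProductSpace ℝ E]
    [FiniteDimensional ℝ E] (hE : 2 < finrank ℝ E) (x y : E) :
    ∃ v : E, ‖v‖ = 1 ∧ inner ℝ x v = 0 ∧ inner ℝ y v = 0 := by
  let f : E →ₗ[ℝ] ℝ × ℝ := (innerₛₗ ℝ x).prod (innerₛₗ ℝ y)
  have hker : LinearMap.ker f ≠ ⊥ :=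
    LinearMap.ker_ne_bot_of_finrank_lt (by simpa [finrank_prod] using hE)
  obtain ⟨v, hv, hv0⟩ := (Submodule.ne_bot_iff _).mp hker
  simp only [f, LinearMap.ker_prod, Submodule.mem_inf, LinearMap.mem_ker, innerₛₗ_apply_apply] at hv
  refine ⟨(‖v‖⁻¹ : ℝ) • v, norm_smul_inv_norm hv0, ?_, ?_⟩ <;>
    simp [inner_smul_right, hv.1, hv.2]

namespace Quaternion

lemma mul_star_eq_one_of_norm_eq_one {q : ℍ} (hq : ‖q‖ = 1) : q * star q = 1 := by
  rw [self_mul_star, normSq_eq_norm_mul_self, hq, mul_one, coe_one]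

lemma norm_sub_eq_norm_star_mul_sub_one {q : ℍ} (hq : ‖q‖ = 1) (q' : ℍ) :
    ‖q' - q‖ = ‖star q * q' - 1‖ := by
  calc ‖q' - q‖ = ‖q * (star q * q' - 1)‖ := by
        rw [mul_sub, ← mul_assoc, mul_star_eq_one_of_norm_eq_one hq, one_mul, mul_one]
    _ = ‖star q * q' - 1‖ := by rw [norm_mul, hq, one_mul]

lemma re_mul_mul_star_of_re_eq_zero (q : ℍ) {v : ℍ} (hv : v.re = 0) : (q * v * star q).re = 0 := by
  simp only [re_mul, imI_mul, imJ_mul, imK_mul, re_star, imI_star, imJ_star, imK_star, hv]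
  ring

lemma im_mul_sub_mul_im (r v : ℍ) : r.im * v - v * r.im = r * v - v * r := by
  conv_rhs => rw [← re_add_im r]
  rw [mul_add, add_mul, coe_commutes]
  abel

lemma norm_mul_mul_star_sub_self {r : ℍ} (hr : ‖r‖ = 1) (v : ℍ) :
    ‖r * v * star r - v‖ = ‖r * v - v * r‖ := by
  have : r * v * star r - v = (r * v - v * r) * star r := by
    rw [sub_mul, mul_assoc v, mul_star_eq_one_of_norm_eq_one hr, mul_one]
  rw [this, norm_mul, norm_star, hr, mul_one]

lemma norm_mul_mul_star_sub_mul_mul_star {q q' : ℍ} (hq : ‖q‖ = 1) (hq' : ‖q'‖ = 1) (v : ℍ) :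
    ‖q' * v * star q' - q * v * star q‖ = ‖(star q * q').im * v - v * (star q * q').im‖ := by
  set r := star q * q'
  have hr : ‖r‖ = 1 := by rw [norm_mul, norm_star, hq, hq', one_mul]
  have hq' : q' = q * r := by rw [← mul_assoc, mul_star_eq_one_of_norm_eq_one hq, one_mul]
  have : q' * v * star q' - q * v * star q = q * (r * v * star r - v) * star q := by
    rw [hq', star_mul]; noncomm_ring
  rw [this, norm_mul, norm_mul, norm_star, hq, one_mul, mul_one, norm_mul_mul_star_sub_self hr,
    im_mul_sub_mul_im]

lemma norm_mul_sub_mul_le (w v : ℍ) : ‖w * v - v * w‖ ≤ 2 * ‖w‖ * ‖v‖ := by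
  calc ‖w * v - v * w‖ ≤ ‖w * v‖ + ‖v * w‖ := norm_sub_le _ _
    _ = 2 * ‖w‖ * ‖v‖ := by rw [norm_mul, norm_mul]; ring

lemma mul_eq_neg_mul_of_inner_eq_zero {w v : ℍ} (hw : w.re = 0) (hv : v.re = 0)
    (h : inner ℝ w v = 0) : v * w = -(w * v) := by
  rw [inner_def] at h
  simp only [re_mul, imI_star, imJ_star, imK_star, re_star, hv] at h
  ext <;> simp only [re_mul, imI_mul, imJ_mul, imK_mul, re_neg, imI_neg, imJ_neg, imK_neg, hw, hv]
  · linear_combination (-2 : ℝ) * h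
  all_goals ring

lemma norm_mul_sub_mul_of_inner_eq_zero {w v : ℍ} (hw : w.re = 0) (hv : v.re = 0)
    (h : inner ℝ w v = 0) : ‖w * v - v * w‖ = 2 * ‖w‖ * ‖v‖ := by
  rw [mul_eq_neg_mul_of_inner_eq_zero hw hv h, sub_neg_eq_add, ← two_smul ℝ, norm_smul, norm_mul,
    Real.norm_two, mul_assoc]

lemma two_mul_norm_im {r : ℍ} (hr : ‖r‖ = 1) :
    2 * ‖r.im‖ = ‖r - 1‖ * √(4 - ‖r - 1‖ ^ 2) := by
  have hr' : r.re ^ 2 + r.imI ^ 2 + r.imJ ^ 2 + r.imK ^ 2 = 1 := by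
    rw [← normSq_def', normSq_eq_norm_mul_self, hr, mul_one]
  have hsub : ‖r - 1‖ ^ 2 = 2 - 2 * r.re := by
    rw [sq, ← normSq_eq_norm_mul_self, normSq_def']
    simp only [re_sub, imI_sub, imJ_sub, imK_sub, re_one, imI_one, imJ_one, imK_one]
    linear_combination hr'
  have him : ‖r.im‖ ^ 2 = 1 - r.re ^ 2 := by
    rw [sq, ← normSq_eq_norm_mul_self, normSq_def']
    simp only [re_im, imI_im, imJ_im, imK_im]
    linear_combination hr'
  have hsq : (2 * ‖r.im‖) ^ 2 = ‖r - 1‖ ^ 2 * (4 - ‖r - 1‖ ^ 2) := by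
    rw [mul_pow, him, hsub]; ring
  rw [← Real.sqrt_sq (by positivity : 0 ≤ 2 * ‖r.im‖), hsq, Real.sqrt_mul (sq_nonneg _),
    Real.sqrt_sq (norm_nonneg _)]

end Quaternion

/-- The pure quaternion with coordinates `v` in the basis `i, j, k`. -/
def pureQuat (v : Fin 3 → ℝ) : H := ⟨0, v 0, v 1, v 2⟩

lemma pureQuat_pureComp {p : H} (hp : p.re = 0) : pureQuat (fun i => pureComp i p) = p := by
  ext <;> simp [pureQuat, pureComp, hp]

lemma euclNorm_pureComp {p : H} (hp : p.re = 0) : euclNorm (fun i => pureComp i p) = ‖p‖ := by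
  rw [euclNorm, ← Real.sqrt_sq (norm_nonneg p), sq, ← normSq_eq_norm_mul_self, normSq_def']
  simp [Fin.sum_univ_three, pureComp, hp]

lemma norm_pureQuat (v : Fin 3 → ℝ) : ‖pureQuat v‖ = euclNorm v := by
  rw [← euclNorm_pureComp (rfl : (pureQuat v).re = 0)]
  congr 1
  funext i
  fin_cases i <;> rfl

lemma rotMat_mulVec_apply (q : H) (v : Fin 3 → ℝ) (i : Fin 3) :
    (rotMat q *ᵥ v) i = pureComp i (q * pureQuat v * star q) := by
  obtain ⟨h₀, h₁, h₂, h₃⟩ : (pureQuat v).re = 0 ∧ (pureQuat v).imI = v 0 ∧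
      (pureQuat v).imJ = v 1 ∧ (pureQuat v).imK = v 2 := ⟨rfl, rfl, rfl, rfl⟩
  fin_cases i <;>
  · simp only [mulVec, dotProduct, rotMat, pureComp, pureBasis, Fin.sum_univ_three, of_apply,
      Fin.isValue, Fin.zero_eta, Fin.mk_one, Fin.reduceFinMk, cons_val, cons_val_zero, cons_val_one,
      re_mul, imI_mul, imJ_mul, imK_mul, re_star, imI_star, imJ_star, imK_star, h₀, h₁, h₂, h₃]
    ring

lemma euclNorm_rotMat_sub_rotMat_mulVec {q qhat : H} (hq : ‖q‖ = 1) (hqhat : ‖qhat‖ = 1)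
    (v : Fin 3 → ℝ) :
    euclNorm ((rotMat qhat - rotMat q) *ᵥ v) =
      ‖(star q * qhat).im * pureQuat v - pureQuat v * (star q * qhat).im‖ := by
  have hre : (qhat * pureQuat v * star qhat - q * pureQuat v * star q).re = 0 := by
    rw [re_sub, re_mul_mul_star_of_re_eq_zero _ rfl, re_mul_mul_star_of_re_eq_zero _ rfl, sub_zero]
  have hcomp : (rotMat qhat - rotMat q) *ᵥ v =
      fun i => pureComp i (qhat * pureQuat v * star qhat - q * pureQuat v * star q) := by
    funext i
    rw [sub_mulVec, Pi.sub_apply, rotMat_mulVec_apply, rotMat_mulVec_apply]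
    fin_cases i <;> simp [pureComp]
  rw [hcomp, euclNorm_pureComp hre, norm_mul_mul_star_sub_mul_mul_star hq hqhat]

lemma opNorm_rotMat_sub_rotMat_eq_two_mul_norm_im {q qhat : H} (hq : ‖q‖ = 1)
    (hqhat : ‖qhat‖ = 1) : opNorm (rotMat qhat - rotMat q) = 2 * ‖(star q * qhat).im‖ := by
  set w := (star q * qhat).im
  refine IsGreatest.csSup_eq ⟨?_, ?_⟩
  · -- orthogonality to `1` makes `V` pure
    obtain ⟨V, hV, h1V, hwV⟩ :=
      exists_norm_eq_one_inner_eq_zero (by rw [finrank_eq_four]; norm_num) (1 : H) w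
    have hVre : V.re = 0 := by simpa [inner_def] using h1V
    refine ⟨fun i => pureComp i V, by rw [euclNorm_pureComp hVre, hV], ?_⟩
    rw [euclNorm_rotMat_sub_rotMat_mulVec hq hqhat, pureQuat_pureComp hVre,
      norm_mul_sub_mul_of_inner_eq_zero (re_im _) hVre hwV, hV, mul_one]
  · rintro x ⟨v, hv, rfl⟩
    rw [euclNorm_rotMat_sub_rotMat_mulVec hq hqhat]
    simpa [norm_pureQuat, hv] using norm_mul_sub_mul_le w (pureQuat v)

/-- For unit quaternions `q, q̂`,
`‖R(q̂) − R(q)‖₂ = |q̂ − q|₂ √(4 − |q̂ − q|₂²)`. -/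
theorem opNorm_rotMat_sub_rotMat (q qhat : H) (hq : ‖q‖ = 1) (hqhat : ‖qhat‖ = 1) :
    opNorm (rotMat qhat - rotMat q) = ‖qhat - q‖ * Real.sqrt (4 - ‖qhat - q‖ ^ 2) := by
  have hr : ‖star q * qhat‖ = 1 := by rw [norm_mul, norm_star, hq, hqhat, one_mul]
  rw [opNorm_rotMat_sub_rotMat_eq_two_mul_norm_im hq hqhat, norm_sub_eq_norm_star_mul_sub_one hq,
    two_mul_norm_im hr]
end
end

section
/- With O = Q Q* (Q ∈ ℍ^N with unit quaternion entries) and Ô quaternion Hermitian with largest eigenvalue λ₁, setting e(O) = ‖Ô − O‖_F / ‖O‖_F and noting ‖O‖_F = N: one has 1 − e(O) ≤ λ₁/N, and if additionally every diagonal entry of Ô equals 1 and every entry of Ô is a unit quaternion, then λ₁ ≤ N. -/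
/-! Realify `ℍ^N` with the inner product `Re ∑ xᵢ ȳᵢ`; a Hermitian quaternion matrix then acts
as a symmetric real operator, so the maximum of its Rayleigh quotient is a real right eigenvalue
and hence at most `λ₁`. At `Q` one has `O Q = N Q` and `‖Q‖² = N`, and `Ô − O` shifts the Rayleigh
quotient by at most `‖Ô − O‖_F`, so `λ₁ ≥ N − ‖Ô − O‖_F = N (1 − e)`. Conversely
`‖Ô v‖ ≤ ‖Ô‖_F ‖v‖` by Cauchy–Schwarz, and `‖Ô‖_F = N` when all entries are unit quaternions. -/

noncomputable section

/-- Frobenius norm of a quaternion matrix. -/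
def frobNorm {n : ℕ} (A : Matrix (Fin n) (Fin n) H) : ℝ :=
  Real.sqrt (∑ i, ∑ j, ‖A i j‖ ^ 2)

open scoped InnerProductSpace

namespace LinearMap.IsSymmetric

variable {𝕜 E : Type*} [RCLike 𝕜] [NormedAddCommGroup E] [InnerProductSpace 𝕜 E]
  [FiniteDimensional 𝕜 E]

theorem exists_hasEigenvalue_rayleigh_le {T : E →ₗ[𝕜] E} (hT : T.IsSymmetric) {x : E}
    (hx : x ≠ 0) :
    ∃ μ : ℝ, Module.End.HasEigenvalue T μ ∧ RCLike.re ⟪T x, x⟫_𝕜 / ‖x‖ ^ 2 ≤ μ := by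
  have : Nontrivial E := ⟨x, 0, hx⟩
  refine ⟨_, hT.hasEigenvalue_iSup_of_finiteDimensional,
    le_ciSup (f := fun y : {y : E // y ≠ 0} ↦ RCLike.re ⟪T y, y⟫_𝕜 / ‖(y : E)‖ ^ 2) ?_ ⟨x, hx⟩⟩
  refine ⟨‖LinearMap.toContinuousLinearMap T‖, ?_⟩
  rintro _ ⟨y, rfl⟩
  exact (le_abs_self _).trans ((LinearMap.toContinuousLinearMap T).rayleighQuotient_le_norm y)

end LinearMap.IsSymmetric

namespace Quaternion

variable {R : Type*} [CommRing R]

theorem re_mul_comm (a b : ℍ[R]) : (a * b).re = (b * a).re := by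
  simp only [re_mul]; ring

theorem re_sum {α : Type*} (s : Finset α) (f : α → ℍ[R]) :
    (∑ i ∈ s, f i).re = ∑ i ∈ s, (f i).re :=
  map_sum (QuaternionAlgebra.reₗ _ _ _) f s

end Quaternion

namespace Matrix

theorem sum_norm_mulVec_sq_le {R m n : Type*} [NormedRing R] [Fintype m] [Fintype n]
    (A : Matrix m n R) (v : n → R) :
    ∑ i, ‖(A *ᵥ v) i‖ ^ 2 ≤ (∑ i, ∑ j, ‖A i j‖ ^ 2) * ∑ j, ‖v j‖ ^ 2 := by
  rw [Finset.sum_mul]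
  refine Finset.sum_le_sum fun i _ => ?_
  calc ‖(A *ᵥ v) i‖ ^ 2 ≤ (∑ j, ‖A i j‖ * ‖v j‖) ^ 2 := by
        gcongr
        exact (norm_sum_le _ _).trans (Finset.sum_le_sum fun j _ => norm_mul_le _ _)
    _ ≤ (∑ j, ‖A i j‖ ^ 2) * ∑ j, ‖v j‖ ^ 2 := Finset.sum_mul_sq_le_sq_mul_sq _ _ _

variable {ι : Type*} [Fintype ι]

def toEuclideanRealLin :
    Matrix ι ι H →ₗ[ℝ] EuclideanSpace H ι →ₗ[ℝ] EuclideanSpace H ι :=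
  (WithLp.linearEquiv 2 ℝ (ι → H)).symm.conj.toLinearMap ∘ₗ mulVecBilin ℝ ℝ

theorem toEuclideanRealLin_apply (A : Matrix ι ι H) (v : EuclideanSpace H ι) :
    toEuclideanRealLin A v = WithLp.toLp 2 (A *ᵥ v) := rfl

theorem inner_eq_re_star_dotProduct (x y : EuclideanSpace H ι) :
    ⟪x, y⟫_ℝ = (star ⇑y ⬝ᵥ ⇑x).re := by
  simp only [PiLp.inner_apply, Quaternion.inner_def, dotProduct, Pi.star_apply,
    Quaternion.re_sum, Quaternion.re_mul_comm (x _)]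

theorem IsHermitian.isSymmetric_toEuclideanRealLin {A : Matrix ι ι H} (hA : A.IsHermitian) :
    (toEuclideanRealLin A).IsSymmetric := by
  intro x y
  have hstar : star ⇑y ᵥ* A = star (A *ᵥ y) := by rw [star_mulVec, hA.eq]
  rw [inner_eq_re_star_dotProduct, inner_eq_re_star_dotProduct, toEuclideanRealLin_apply,
    toEuclideanRealLin_apply, WithLp.ofLp_toLp, WithLp.ofLp_toLp, dotProduct_mulVec, hstar]

theorem toEuclideanRealLin_eq_smul_iff (A : Matrix ι ι H) (v : EuclideanSpace H ι) (μ : ℝ) :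
    toEuclideanRealLin A v = μ • v ↔ A *ᵥ v = fun i ↦ v i * (μ : H) := by
  simp only [toEuclideanRealLin_apply, Quaternion.mul_coe_eq_smul]
  exact (WithLp.toLp_injective 2).eq_iff

theorem vecMulVec_star_mulVec_self (Q : ι → H) (hQ : ∀ i, ‖Q i‖ = 1) :
    vecMulVec Q (star Q) *ᵥ Q = fun i ↦ Q i * (Fintype.card ι : ℝ) := by
  have hQQ : star Q ⬝ᵥ Q = (Fintype.card ι : ℝ) := by
    simp [dotProduct, Quaternion.star_mul_self, Quaternion.normSq_eq_norm_mul_self, hQ,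
      Quaternion.coe_natCast]
  rw [vecMulVec_mulVec, hQQ]
  rfl

variable {n : ℕ}

theorem norm_toEuclideanRealLin_le (A : Matrix (Fin n) (Fin n) H)
    (v : EuclideanSpace H (Fin n)) :
    ‖toEuclideanRealLin A v‖ ≤ frobNorm A * ‖v‖ := by
  rw [frobNorm, ← sq_le_sq₀ (norm_nonneg _) (by positivity), mul_pow,
    Real.sq_sqrt (by positivity), PiLp.norm_sq_eq_of_L2, PiLp.norm_sq_eq_of_L2]
  exact sum_norm_mulVec_sq_le A v

theorem frobNorm_eq_of_forall_norm_eq_one {A : Matrix (Fin n) (Fin n) H}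
    (hA : ∀ i j, ‖A i j‖ = 1) :
    frobNorm A = n := by
  simp [frobNorm, hA]

theorem abs_le_frobNorm_of_mulVec_eq {A : Matrix (Fin n) (Fin n) H} {v : Fin n → H}
    (hv : v ≠ 0) {μ : ℝ} (hAv : A *ᵥ v = fun i ↦ v i * (μ : H)) : |μ| ≤ frobNorm A := by
  have hw : toEuclideanRealLin A (WithLp.toLp 2 v) = μ • WithLp.toLp 2 v :=
    (toEuclideanRealLin_eq_smul_iff A _ μ).2 hAv
  have h := norm_toEuclideanRealLin_le A (WithLp.toLp 2 v)
  rw [hw, norm_smul, Real.norm_eq_abs] at h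
  exact le_of_mul_le_mul_right h (norm_pos_iff.2 (by simpa using hv))

theorem IsHermitian.exists_eigenvalue_ge_sub_frobNorm {A B : Matrix (Fin n) (Fin n) H}
    (hA : A.IsHermitian) {q : Fin n → H} (hq : q ≠ 0) {c : ℝ}
    (hBq : B *ᵥ q = fun i ↦ q i * (c : H)) :
    ∃ μ : ℝ, ∃ v : Fin n → H, v ≠ 0 ∧ (A *ᵥ v = fun i ↦ v i * (μ : H)) ∧
      c - frobNorm (A - B) ≤ μ := by
  set x := WithLp.toLp 2 q
  have hx : x ≠ 0 := by simpa [x] using hq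
  obtain ⟨μ, hμ, hle⟩ := hA.isSymmetric_toEuclideanRealLin.exists_hasEigenvalue_rayleigh_le hx
  obtain ⟨v, hv⟩ := hμ.exists_hasEigenvector
  refine ⟨μ, v, by simpa using hv.2, (toEuclideanRealLin_eq_smul_iff A v μ).1 hv.apply_eq_smul,
    le_trans ?_ hle⟩
  have hBx : toEuclideanRealLin B x = c • x := (toEuclideanRealLin_eq_smul_iff B x c).2 hBq
  have hpert : -(frobNorm (A - B) * ‖x‖ ^ 2) ≤ ⟪toEuclideanRealLin (A - B) x, x⟫_ℝ :=
    calc -(frobNorm (A - B) * ‖x‖ ^ 2) = -(frobNorm (A - B) * ‖x‖ * ‖x‖) := by ring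
      _ ≤ -(‖toEuclideanRealLin (A - B) x‖ * ‖x‖) := by
        gcongr
        exact norm_toEuclideanRealLin_le _ x
      _ ≤ ⟪toEuclideanRealLin (A - B) x, x⟫_ℝ := neg_le_of_abs_le (abs_real_inner_le_norm _ _)
  have hsplit :
      toEuclideanRealLin A x = toEuclideanRealLin B x + toEuclideanRealLin (A - B) x := by
    rw [map_sub, LinearMap.sub_apply, add_sub_cancel]
  rw [le_div_iff₀ (by positivity), RCLike.re_to_real, hsplit, inner_add_left, hBx,
    real_inner_smul_left, real_inner_self_eq_norm_sq]
  linarith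

end Matrix

/-- With `O = Q Q*` (`Q` of unit quaternions), `Ô` Hermitian with
largest eigenvalue `λ₁`, and `e(O) = ‖Ô − O‖_F / N`: one has `1 − e(O) ≤ λ₁/N`;
and if moreover all diagonal entries of `Ô` equal `1` and all entries are unit
quaternions, then `λ₁ ≤ N`. -/
theorem largest_eigenvalue_bounds (N : ℕ) (hN : 0 < N)
    (Q : Fin N → H) (hQ : ∀ i, ‖Q i‖ = 1)
    (O : Matrix (Fin N) (Fin N) H) (hO : O = Matrix.of fun i j => Q i * star (Q j))
    (Ohat : Matrix (Fin N) (Fin N) H) (hHerm : Ohat.IsHermitian)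
    (lam1 : ℝ)
    (hlam1 : ∃ v : Fin N → H, v ≠ 0 ∧ Ohat.mulVec v = fun i => v i * (lam1 : H))
    (hmax : ∀ (mu : ℝ) (v : Fin N → H), v ≠ 0 →
      (Ohat.mulVec v = fun i => v i * (mu : H)) → mu ≤ lam1)
    (e : ℝ) (he : e = frobNorm (Ohat - O) / N) :
    (1 - e ≤ lam1 / N) ∧
    ((∀ i, Ohat i i = 1) → (∀ i j, ‖Ohat i j‖ = 1) → lam1 ≤ N) := by
  refine ⟨?_, fun _ hunit ↦ ?_⟩
  · have hNR : (0 : ℝ) < N := Nat.cast_pos.2 hN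
    have hQ0 : Q ≠ 0 := fun h ↦ by simpa [h] using hQ ⟨0, hN⟩
    have hOQ : O.mulVec Q = fun i ↦ Q i * (N : ℝ) := by
      have h := Matrix.vecMulVec_star_mulVec_self Q hQ
      rw [Fintype.card_fin] at h
      exact hO ▸ h
    obtain ⟨μ, v, hv, hOhat_v, hμ⟩ := hHerm.exists_eigenvalue_ge_sub_frobNorm hQ0 hOQ
    have hμlam : μ ≤ lam1 := hmax μ v hv hOhat_v
    rw [he, ← div_self hNR.ne', ← sub_div]
    exact div_le_div_of_nonneg_right (by linarith) hNR.le
  · obtain ⟨v, hv, hOhat_v⟩ := hlam1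
    calc lam1 ≤ |lam1| := le_abs_self lam1
      _ ≤ frobNorm Ohat := Matrix.abs_le_frobNorm_of_mulVec_eq hv hOhat_v
      _ = N := Matrix.frobNorm_eq_of_forall_norm_eq_one hunit
end
end
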